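/- Let F be a field of characteristic 0 and let h, x ∈ F[[t]] be formal power series with zero constant term such that h ∘ h = t, and suppose x ∘ h = -x and h' · (x' ∘ h) = x'. Then x' = 0. Consequently, no element of the derivative subgroup {(x'(t), x(t))} of the Riordan group conjugates the involution (h'(t), h(t)) to (1, -t). -/

import Mathlib

/-!
Differentiating `x ∘ h = -x` by the chain rule gives `h' · (x' ∘ h) = -x'`, while the second
condition says the same product is `x'`; so `x' = -x'`, and `x' = 0` in characteristic zero.
The chain rule comes from identifying `comp` with Mathlib's substitution `PowerSeries.subst`.
-/

open PowerSeries

/-- Composition `f ∘ g` of formal power series, valid when `g` has zero constant term. -/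
noncomputable def PowerSeries.comp {F : Type*} [Field F] (f g : PowerSeries F) :
    PowerSeries F :=
  PowerSeries.mk fun n => ∑ k ∈ Finset.range (n + 1),
    PowerSeries.coeff k f * PowerSeries.coeff n (g ^ k)

namespace PowerSeries

theorem coeff_pow_eq_zero_of_lt {R : Type*} [CommSemiring R] {g : R⟦X⟧}
    (hg : constantCoeff g = 0) {n k : ℕ} (hnk : n < k) : coeff n (g ^ k) = 0 :=
  X_pow_dvd_iff.mp (pow_dvd_pow_of_dvd (X_dvd_iff.mpr hg) k) n hnk

variable {F : Type*} [Field F]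

theorem comp_eq_subst (f : F⟦X⟧) {g : F⟦X⟧} (hg : constantCoeff g = 0) :
    f.comp g = f.subst g := by
  ext n
  rw [comp, coeff_mk, coeff_subst' (HasSubst.of_constantCoeff_zero' hg),
    finsum_eq_sum_of_support_subset _ (s := Finset.range (n + 1))]
  · rfl
  intro k hk
  rw [Finset.coe_range, Set.mem_Iio]
  by_contra! hkn
  exact hk (by simp only [coeff_pow_eq_zero_of_lt hg hkn, smul_zero])

theorem derivative_comp (f : F⟦X⟧) {g : F⟦X⟧} (hg : constantCoeff g = 0) :
    d⁄dX F (f.comp g) = d⁄dX F g * (d⁄dX F f).comp g := by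
  rw [comp_eq_subst _ hg, comp_eq_subst _ hg,
    derivative_subst (HasSubst.of_constantCoeff_zero' hg), mul_comm]

end PowerSeries

theorem derivative_subgroup_no_conjugator_general
    {F : Type*} [Field F] [CharZero F] (h x : PowerSeries F)
    (hh0 : PowerSeries.constantCoeff h = 0)
    (hodd : PowerSeries.comp x h = -x)
    (hchain : h.derivativeFun * PowerSeries.comp x.derivativeFun h = x.derivativeFun) :
    x.derivativeFun = 0 := by
  have := IsAddTorsionFree.of_module_rat F⟦X⟧
  refine self_eq_neg.mp ?_
  calc d⁄dX F x = d⁄dX F h * (d⁄dX F x).comp h := hchain.symm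
    _ = d⁄dX F (x.comp h) := (derivative_comp x hh0).symm
    _ = -d⁄dX F x := by rw [hodd, map_neg]

/-- If `h ∘ h = t`, `x ∘ h = -x` and `h' · (x' ∘ h) = x'`, then `x' = 0`.
Hence no element of the derivative subgroup of the Riordan group conjugates
the involution `(h', h)` to `(1, -t)`. -/
theorem derivative_subgroup_no_conjugator
    {F : Type*} [Field F] [CharZero F] (h x : PowerSeries F)
    (hh0 : PowerSeries.constantCoeff h = 0)
    (hx0 : PowerSeries.constantCoeff x = 0)
    (hinv : PowerSeries.comp h h = X)
    (hodd : PowerSeries.comp x h = -x)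
    (hchain : h.derivativeFun * PowerSeries.comp x.derivativeFun h = x.derivativeFun) :
    x.derivativeFun = 0 :=
  derivative_subgroup_no_conjugator_general h x hh0 hodd hchain
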